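/- Assume conditions (A2) and (A3), and let Z be a nonnegative random variable on a probability space whose Laplace transform satisfies E[e^{−λ Z}] = exp(−∫₀^∞ F(v_s(λ)) ds) for all λ ≥ 0. Then for every λ > 0, E[Z e^{−λ Z}] = (F(λ)/ψ(λ)) · E[e^{−λ Z}]. Moreover, if b > 0 and β + ∫₀^∞ u n(du) < ∞, then E[Z] = (β + ∫₀^∞ u n(du))/b. -/

import Mathlib

open MeasureTheory Real Set Filter

/-- The (sub)-critical branching mechanism
`ψ(z) = b z + σ z² + ∫₀^∞ (e^{−z u} − 1 + z u) m(du)`. -/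
noncomputable def psi (b σ : ℝ) (m : Measure ℝ) (z : ℝ) : ℝ :=
  b * z + σ * z ^ 2 + ∫ u in Ioi (0 : ℝ), (Real.exp (-(z * u)) - 1 + z * u) ∂m

/-- Condition (A3): either `σ > 0` or `∫₀^1 u m(du) = ∞`. -/
def condA3 (σ : ℝ) (m : Measure ℝ) : Prop :=
  0 < σ ∨ ∫⁻ u in Ioc (0 : ℝ) 1, ENNReal.ofReal u ∂m = ⊤

/-- `v t λ ∈ (0, λ]` is the unique solution of `∫_{v_t(λ)}^{λ} dz/ψ(z) = t`
(the cumulant semigroup). -/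
def IsCumulant (b σ : ℝ) (m : Measure ℝ) (v : ℝ → ℝ → ℝ) : Prop :=
  ∀ lam > (0 : ℝ), ∀ t ≥ (0 : ℝ),
    v t lam ∈ Ioc 0 lam ∧ ∫ z in (v t lam)..lam, (psi b σ m z)⁻¹ = t

/-- The immigration mechanism `F(z) = β z + ∫₀^∞ (1 − e^{−z u}) n(du)`. -/
noncomputable def Fim (β : ℝ) (n : Measure ℝ) (z : ℝ) : ℝ :=
  β * z + ∫ u in Ioi (0 : ℝ), (1 - Real.exp (-(z * u))) ∂n

/-- Condition (A2): `∫₀^λ F(z)/ψ(z) dz < ∞` for some `λ > 0`. -/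
def condA2 (b σ β : ℝ) (m n : Measure ℝ) : Prop :=
  ∃ lam > (0 : ℝ), IntegrableOn (fun z => Fim β n z / psi b σ m z) (Ioo 0 lam)


/-!
Write `L(λ) = E[e^{-λZ}]` and `Φ(λ) = ∫_{(0,λ]} F(z)/ψ(z) dz`. The substitution `z = v_s(λ)`,
for which `ds = -dz/ψ(z)`, turns the hypothesis on `Z` into `L = exp (-Φ)` on `(0, ∞)`.
Differentiating under the expectation gives `L'(λ) = -E[Z e^{-λZ}]`, while
`(exp ∘ -Φ)'(λ) = -(F(λ)/ψ(λ)) L(λ)`: this is the first identity. For the second, as `λ ↓ 0`,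
`F(λ)/ψ(λ) → F'(0+)/ψ'(0+) = (β + ∫ u n(du))/b` and `L(λ) → 1`, and monotone convergence
identifies the limit of `E[Z e^{-λZ}]` with `E[Z]`.
-/

open scoped Topology

lemma exp_neg_sub_one_add_monotoneOn : MonotoneOn (fun x => exp (-x) - 1 + x) (Ici 0) := by
  intro x hx y _ hxy
  have hsplit : exp (-y) = exp (-x) * exp (-(y - x)) := by rw [← exp_add]; ring_nf
  have hx1 : exp (-x) ≤ 1 := exp_le_one_iff.2 (by simpa using hx)
  have hd1 : exp (-(y - x)) ≤ 1 := exp_le_one_iff.2 (by linarith)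
  have hd2 : 1 - (y - x) ≤ exp (-(y - x)) := by linarith [add_one_le_exp (-(y - x))]
  simp only
  nlinarith [exp_pos (-x)]

lemma exp_neg_sub_one_add_le_self {x : ℝ} (hx : 0 ≤ x) : exp (-x) - 1 + x ≤ x := by
  linarith [exp_le_one_iff.2 (neg_nonpos.2 hx)]

lemma exp_neg_sub_one_add_le_sq {x : ℝ} (hx : 0 ≤ x) : exp (-x) - 1 + x ≤ x ^ 2 := by
  rcases le_total x 1 with hx1 | hx1
  · have := abs_exp_sub_one_sub_id_le (x := -x) (by rwa [abs_neg, abs_of_nonneg hx])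
    linarith [(abs_le.1 this).2, neg_sq x]
  · nlinarith [exp_neg_sub_one_add_le_self hx]

lemma exp_neg_sub_one_add_nonneg (x : ℝ) : 0 ≤ exp (-x) - 1 + x := by
  linarith [add_one_le_exp (-x)]

lemma exp_neg_sub_one_add_pos {x : ℝ} (hx : 0 < x) : 0 < exp (-x) - 1 + x := by
  linarith [add_one_lt_exp (neg_ne_zero.2 hx.ne')]

lemma one_sub_exp_neg_monotone : Monotone (fun x => 1 - exp (-x)) :=
  fun _ _ h => by dsimp only; linarith [exp_le_exp.2 (neg_le_neg h)]

lemma one_sub_exp_neg_nonneg {x : ℝ} (hx : 0 ≤ x) : 0 ≤ 1 - exp (-x) := by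
  linarith [exp_le_one_iff.2 (neg_nonpos.2 hx)]

lemma one_sub_exp_neg_le_self (x : ℝ) : 1 - exp (-x) ≤ x := by
  linarith [add_one_le_exp (-x)]

lemma exp_neg_sub_one_add_mul_le {z u : ℝ} (hz : 0 ≤ z) (hu : 0 ≤ u) :
    exp (-(z * u)) - 1 + z * u ≤ max z (z ^ 2) * min u (u ^ 2) := by
  have hzu := mul_nonneg hz hu
  rcases le_total u 1 with hu1 | hu1
  · rw [min_eq_right (by nlinarith)]
    calc _ ≤ (z * u) ^ 2 := exp_neg_sub_one_add_le_sq hzu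
      _ = z ^ 2 * u ^ 2 := by ring
      _ ≤ _ := mul_le_mul_of_nonneg_right (le_max_right _ _) (sq_nonneg u)
  · rw [min_eq_left (by nlinarith)]
    exact (exp_neg_sub_one_add_le_self hzu).trans
      (mul_le_mul_of_nonneg_right (le_max_left _ _) hu)

lemma one_sub_exp_neg_mul_le {z u : ℝ} (hu : 0 ≤ u) :
    1 - exp (-(z * u)) ≤ max 1 z * min 1 u := by
  rcases le_total u 1 with hu1 | hu1
  · rw [min_eq_right hu1]
    exact (one_sub_exp_neg_le_self _).trans (mul_le_mul_of_nonneg_right (le_max_right _ _) hu)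
  · rw [min_eq_left hu1, mul_one]
    linarith [exp_pos (-(z * u)), le_max_left 1 z]

lemma mul_exp_neg_mul_le {c : ℝ} (hc : 0 < c) (x : ℝ) :
    x * exp (-(c * x)) ≤ (c * exp 1)⁻¹ :=
  calc x * exp (-(c * x)) = c⁻¹ * (c * x * exp (-(c * x))) := by field_simp
    _ ≤ c⁻¹ * (exp (c * x - 1) * exp (-(c * x))) := by
        gcongr
        linarith [add_one_le_exp (c * x - 1)]
    _ = (c * exp 1)⁻¹ := by rw [← exp_add, mul_inv, ← exp_neg]; ring_nf

section ParametricIntegral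

variable {μ : Measure ℝ} {f : ℝ → ℝ}

lemma continuousAt_setIntegral_Ioi_comp_mul (hf : Continuous f) (hf0 : f 0 = 0)
    (hmono : MonotoneOn f (Ici 0))
    (hint : ∀ z > 0, IntegrableOn (fun u => f (z * u)) (Ioi 0) μ) {z₀ : ℝ} (hz₀ : 0 < z₀) :
    ContinuousAt (fun z => ∫ u in Ioi 0, f (z * u) ∂μ) z₀ := by
  have hle : ∀ {x y : ℝ}, 0 ≤ x → x ≤ y → f x ≤ f y := fun hx hxy =>
    hmono hx (hx.trans hxy) hxy
  -- on `(0, 2 z₀)` the integrand is dominated by its value at `2 z₀`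
  refine continuousAt_of_dominated (bound := fun u => f (2 * z₀ * u))
    (Eventually.of_forall fun _ => (by fun_prop : Continuous _).aestronglyMeasurable) ?_
    (hint _ (by positivity)) (ae_of_all _ fun _ => by fun_prop)
  filter_upwards [Ioo_mem_nhds hz₀ (by linarith : z₀ < 2 * z₀)] with z hz
  filter_upwards [ae_restrict_mem measurableSet_Ioi] with u (hu : 0 < u)
  have hzu : 0 ≤ z * u := mul_nonneg hz.1.le hu.le
  rw [Real.norm_eq_abs, abs_of_nonneg (hf0 ▸ hle le_rfl hzu)]
  exact hle hzu (by nlinarith [hz.2])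

lemma tendsto_setIntegral_Ioi_comp_mul_div {c : ℝ} (hf : Continuous f) (hf0 : f 0 = 0)
    (hf' : HasDerivAt f c 0) {B : ℝ → ℝ} (hB : IntegrableOn B (Ioi 0) μ)
    (hbound : ∀ x ∈ Ioc (0 : ℝ) 1, ∀ u > 0, |f (x * u)| ≤ x * B u) :
    Tendsto (fun x => (∫ u in Ioi 0, f (x * u) ∂μ) / x) (𝓝[>] 0)
      (𝓝 (c * ∫ u in Ioi 0, u ∂μ)) := by
  have hslope : ∀ u, Tendsto (fun x => f (x * u) / x) (𝓝[>] 0) (𝓝 (c * u)) := by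
    intro u
    have hd : HasDerivAt (fun x => f (x * u)) (c * u) 0 :=
      hf'.comp_of_eq (0 : ℝ) (hasDerivAt_mul_const u) (zero_mul u).symm
    refine ((hasDerivAt_iff_tendsto_slope.1 hd).mono_left
      (nhdsWithin_mono _ fun x (hx : 0 < x) => hx.ne')).congr fun x => ?_
    simp [slope_def_field, hf0]
  rw [← integral_const_mul]
  refine (tendsto_integral_filter_of_dominated_convergence B
    (Eventually.of_forall fun _ => (by fun_prop : Continuous _).aestronglyMeasurable) ?_ hB
    (ae_of_all _ hslope)).congr' ?_
  · filter_upwards [Ioc_mem_nhdsGT zero_lt_one] with x hx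
    filter_upwards [ae_restrict_mem measurableSet_Ioi] with u hu
    rw [norm_div, Real.norm_eq_abs, Real.norm_eq_abs, abs_of_pos hx.1, div_le_iff₀' hx.1]
    exact hbound x hx u hu
  · filter_upwards [self_mem_nhdsWithin] with x _
    exact integral_div x _

end ParametricIntegral

/-- One-dimensional change of variables `s = S z` along a decreasing bijection
`S : (a, c] → [0, ∞)` with inverse `v`. -/
lemma setIntegral_Ioi_comp_eq_setIntegral_Ioc {S w v : ℝ → ℝ} {a c : ℝ}
    (hS : ∀ z ∈ Ioc a c, HasDerivAt S (-w z) z) (hw : ∀ z ∈ Ioc a c, 0 < w z) (hSc : S c = 0)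
    (hv : ∀ t ≥ (0 : ℝ), v t ∈ Ioc a c ∧ S (v t) = t) (g : ℝ → ℝ) :
    ∫ s in Ioi 0, g (v s) = ∫ z in Ioc a c, w z * g z := by
  have hanti : StrictAntiOn S (Ioc a c) := by
    refine strictAntiOn_of_hasDerivWithinAt_neg (f' := fun z => -w z) (convex_Ioc a c)
      (fun z hz => (hS z hz).continuousAt.continuousWithinAt) (fun z hz => ?_) fun z hz => ?_
    all_goals rw [interior_Ioc] at hz
    · exact (hS z (Ioo_subset_Ioc_self hz)).hasDerivWithinAt
    · exact neg_neg_of_pos (hw z (Ioo_subset_Ioc_self hz))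
  have hac : a < c := (hv 0 le_rfl).1.1.trans_le (hv 0 le_rfl).1.2
  have himage : S '' Ioc a c = Ici 0 := by
    refine Subset.antisymm ?_ fun t ht => ⟨v t, (hv t ht).1, (hv t ht).2⟩
    rintro _ ⟨z, hz, rfl⟩
    exact hSc ▸ hanti.antitoneOn hz (right_mem_Ioc.2 hac) hz.2
  have hvS : ∀ z ∈ Ioc a c, v (S z) = z := fun z hz =>
    have hSz : S z ∈ Ici 0 := himage ▸ mem_image_of_mem S hz
    hanti.injOn (hv _ hSz).1 hz (hv _ hSz).2
  calc ∫ s in Ioi 0, g (v s)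
      = ∫ s in S '' Ioc a c, g (v s) := by rw [himage, integral_Ici_eq_integral_Ioi]
    _ = ∫ z in Ioc a c, |-w z| • g (v (S z)) :=
        integral_image_eq_integral_abs_deriv_smul measurableSet_Ioc
          (fun z hz => (hS z hz).hasDerivWithinAt) hanti.injOn _
    _ = ∫ z in Ioc a c, w z * g z := by
        refine setIntegral_congr_fun measurableSet_Ioc fun z hz => ?_
        rw [hvS z hz, abs_neg, abs_of_pos (hw z hz), smul_eq_mul]

lemma hasDerivAt_setIntegral_Ioc {W : ℝ → ℝ} {a x : ℝ}
    (hW : ∀ y > a, IntegrableOn W (Ioc a y)) (hx : a < x) (hcont : ContinuousAt W x) :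
    HasDerivAt (fun y => ∫ z in Ioc a y, W z) (W x) x := by
  have hmeas : StronglyMeasurableAtFilter W (𝓝 x) :=
    ⟨Ioo a (x + 1), Ioo_mem_nhds hx (by linarith),
      ((hW (x + 1) (by linarith)).mono_set Ioo_subset_Ioc_self).aestronglyMeasurable⟩
  refine (intervalIntegral.integral_hasDerivAt_right
    ((intervalIntegrable_iff_integrableOn_Ioc_of_le hx.le).2 (hW x hx)) hmeas
    hcont).congr_of_eventuallyEq ?_
  filter_upwards [Ioi_mem_nhds hx] with y (hy : a < y)
  exact (intervalIntegral.integral_of_le hy.le).symm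

section Mechanisms

variable {b σ β : ℝ} {m n : Measure ℝ}

lemma integrableOn_psi_integrand (hm : IntegrableOn (fun u => min u (u ^ 2)) (Ioi 0) m)
    {z : ℝ} (hz : 0 ≤ z) :
    IntegrableOn (fun u => exp (-(z * u)) - 1 + z * u) (Ioi 0) m := by
  refine Integrable.mono' (hm.const_mul (max z (z ^ 2)))
    (by fun_prop : Continuous _).aestronglyMeasurable ?_
  filter_upwards [ae_restrict_mem measurableSet_Ioi] with u (hu : 0 < u)
  rw [Real.norm_eq_abs, abs_of_nonneg (exp_neg_sub_one_add_nonneg _)]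
  exact exp_neg_sub_one_add_mul_le hz hu.le

lemma integrableOn_Fim_integrand (hn : IntegrableOn (fun u => min 1 u) (Ioi 0) n)
    {z : ℝ} (hz : 0 ≤ z) :
    IntegrableOn (fun u => 1 - exp (-(z * u))) (Ioi 0) n := by
  refine Integrable.mono' (hn.const_mul (max 1 z))
    (by fun_prop : Continuous _).aestronglyMeasurable ?_
  filter_upwards [ae_restrict_mem measurableSet_Ioi] with u (hu : 0 < u)
  rw [Real.norm_eq_abs, abs_of_nonneg (one_sub_exp_neg_nonneg (mul_nonneg hz hu.le))]
  exact one_sub_exp_neg_mul_le hu.le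

lemma continuousOn_psi (hm : IntegrableOn (fun u => min u (u ^ 2)) (Ioi 0) m) :
    ContinuousOn (psi b σ m) (Ioi 0) := fun z hz =>
  ((by fun_prop : Continuous fun z => b * z + σ * z ^ 2).continuousAt.add
    (continuousAt_setIntegral_Ioi_comp_mul (f := fun x => exp (-x) - 1 + x) (by fun_prop)
      (by simp) exp_neg_sub_one_add_monotoneOn
      (fun z hz => integrableOn_psi_integrand hm hz.le) hz)).continuousWithinAt

lemma continuousOn_Fim (hn : IntegrableOn (fun u => min 1 u) (Ioi 0) n) :
    ContinuousOn (Fim β n) (Ioi 0) := fun z hz =>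
  ((continuous_const_mul β).continuousAt.add
    (continuousAt_setIntegral_Ioi_comp_mul (f := fun x => 1 - exp (-x)) (by fun_prop)
      (by simp) (one_sub_exp_neg_monotone.monotoneOn _)
      (fun z hz => integrableOn_Fim_integrand hn hz.le) hz)).continuousWithinAt

lemma psi_pos (hb : 0 ≤ b) (hσ : 0 ≤ σ) (hm : IntegrableOn (fun u => min u (u ^ 2)) (Ioi 0) m)
    (hA3 : condA3 σ m) {z : ℝ} (hz : 0 < z) : 0 < psi b σ m z := by
  have hint : 0 ≤ ∫ u in Ioi 0, (exp (-(z * u)) - 1 + z * u) ∂m :=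
    setIntegral_nonneg measurableSet_Ioi fun u _ => exp_neg_sub_one_add_nonneg _
  have hbz : 0 ≤ b * z := mul_nonneg hb hz.le
  unfold psi
  rcases hA3 with hσpos | hlint
  · nlinarith [mul_pos hσpos (pow_pos hz 2)]
  · -- an infinite `∫₀¹ u m(du)` forces `m (0, 1] > 0`, where the integrand is positive
    have hm01 : 0 < m (Ioc 0 1) := by
      refine pos_iff_ne_zero.2 fun h0 => ?_
      rw [setLIntegral_measure_zero _ _ h0] at hlint
      exact ENNReal.zero_ne_top hlint
    have hpos : 0 < ∫ u in Ioi 0, (exp (-(z * u)) - 1 + z * u) ∂m := by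
      rw [setIntegral_pos_iff_support_of_nonneg_ae
        (ae_of_all _ fun _ => exp_neg_sub_one_add_nonneg _) (integrableOn_psi_integrand hm hz.le)]
      refine hm01.trans_le (measure_mono fun u hu => ⟨?_, hu.1⟩)
      exact (exp_neg_sub_one_add_pos (mul_pos hz hu.1)).ne'
    nlinarith [mul_nonneg hσ (sq_nonneg z)]

lemma tendsto_psi_div (hm : IntegrableOn (fun u => min u (u ^ 2)) (Ioi 0) m) :
    Tendsto (fun x => psi b σ m x / x) (𝓝[>] 0) (𝓝 b) := by
  have hderiv : HasDerivAt (fun x => exp (-x) - 1 + x) 0 0 := by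
    simpa using ((hasDerivAt_id' (0 : ℝ)).neg.exp.sub_const 1).fun_add (hasDerivAt_id' 0)
  have hint := tendsto_setIntegral_Ioi_comp_mul_div (by fun_prop) (by simp) hderiv hm
    fun x hx u hu => by
      have hxu : 0 ≤ x * u := mul_nonneg hx.1.le hu.le
      rw [abs_of_nonneg (exp_neg_sub_one_add_nonneg _), mul_min_of_nonneg _ _ hx.1.le]
      refine le_min (exp_neg_sub_one_add_le_self hxu) ((exp_neg_sub_one_add_le_sq hxu).trans ?_)
      nlinarith [mul_le_mul_of_nonneg_right hx.2 (mul_nonneg hx.1.le (sq_nonneg u))]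
  have hlin : Tendsto (fun x => b + σ * x) (𝓝[>] 0) (𝓝 b) := by
    refine tendsto_nhdsWithin_of_tendsto_nhds ?_
    simpa using ((continuous_const_mul σ).const_add b).tendsto 0
  have hlim := hlin.add hint
  rw [zero_mul, add_zero] at hlim
  refine hlim.congr' ?_
  filter_upwards [self_mem_nhdsWithin] with x (hx : 0 < x)
  simp only [psi]
  field_simp

lemma tendsto_Fim_div (hn : IntegrableOn (fun u => u) (Ioi 0) n) :
    Tendsto (fun x => Fim β n x / x) (𝓝[>] 0) (𝓝 (β + ∫ u in Ioi 0, u ∂n)) := by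
  have hderiv : HasDerivAt (fun x => 1 - exp (-x)) 1 0 := by
    simpa using (hasDerivAt_id' (0 : ℝ)).neg.exp.const_sub 1
  have hint := tendsto_setIntegral_Ioi_comp_mul_div (by fun_prop) (by simp) hderiv hn
    fun x hx u hu => by
      rw [abs_of_nonneg (one_sub_exp_neg_nonneg (mul_nonneg hx.1.le hu.le))]
      exact one_sub_exp_neg_le_self _
  have hlim := (tendsto_const_nhds (x := β)).add hint
  rw [one_mul] at hlim
  refine hlim.congr' ?_
  filter_upwards [self_mem_nhdsWithin] with x (hx : 0 < x)
  simp only [Fim]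
  field_simp

lemma tendsto_Fim_div_psi (hm : IntegrableOn (fun u => min u (u ^ 2)) (Ioi 0) m)
    (hn : IntegrableOn (fun u => u) (Ioi 0) n) (hb : b ≠ 0) :
    Tendsto (fun x => Fim β n x / psi b σ m x) (𝓝[>] 0) (𝓝 ((β + ∫ u in Ioi 0, u ∂n) / b)) :=
  ((tendsto_Fim_div hn).div (tendsto_psi_div hm) hb).congr'
    (eventually_nhdsWithin_of_forall fun x (hx : 0 < x) => div_div_div_cancel_right₀ hx.ne' _ _)

lemma continuousOn_inv_psi (hb : 0 ≤ b) (hσ : 0 ≤ σ)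
    (hm : IntegrableOn (fun u => min u (u ^ 2)) (Ioi 0) m) (hA3 : condA3 σ m) :
    ContinuousOn (fun z => (psi b σ m z)⁻¹) (Ioi 0) :=
  (continuousOn_psi hm).inv₀ fun _ hz => (psi_pos hb hσ hm hA3 hz).ne'

lemma continuousOn_Fim_div_psi (hb : 0 ≤ b) (hσ : 0 ≤ σ)
    (hm : IntegrableOn (fun u => min u (u ^ 2)) (Ioi 0) m)
    (hn : IntegrableOn (fun u => min 1 u) (Ioi 0) n) (hA3 : condA3 σ m) :
    ContinuousOn (fun z => Fim β n z / psi b σ m z) (Ioi 0) :=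
  (continuousOn_Fim hn).div (continuousOn_psi hm) fun _ hz => (psi_pos hb hσ hm hA3 hz).ne'

lemma integrableOn_Fim_div_psi (hb : 0 ≤ b) (hσ : 0 ≤ σ)
    (hm : IntegrableOn (fun u => min u (u ^ 2)) (Ioi 0) m)
    (hn : IntegrableOn (fun u => min 1 u) (Ioi 0) n) (hA2 : condA2 b σ β m n)
    (hA3 : condA3 σ m) (lam : ℝ) :
    IntegrableOn (fun z => Fim β n z / psi b σ m z) (Ioc 0 lam) := by
  obtain ⟨lam₀, hlam₀, hint⟩ := hA2
  have hcompact : IntegrableOn (fun z => Fim β n z / psi b σ m z) (Icc lam₀ lam) :=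
    ((continuousOn_Fim_div_psi hb hσ hm hn hA3).mono fun _ hz => hlam₀.trans_le hz.1
      ).integrableOn_compact isCompact_Icc
  refine (hint.union hcompact).mono_set fun z hz => ?_
  rcases lt_or_ge z lam₀ with h | h
  exacts [Or.inl ⟨hz.1, h⟩, Or.inr ⟨h, hz.2⟩]

lemma setIntegral_Ioi_comp_cumulant {v : ℝ → ℝ → ℝ} (hb : 0 ≤ b) (hσ : 0 ≤ σ)
    (hm : IntegrableOn (fun u => min u (u ^ 2)) (Ioi 0) m) (hA3 : condA3 σ m)
    (hv : IsCumulant b σ m v) {lam : ℝ} (hlam : 0 < lam) (g : ℝ → ℝ) :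
    ∫ s in Ioi 0, g (v s lam) = ∫ z in Ioc 0 lam, g z / psi b σ m z := by
  have hcont := continuousOn_inv_psi hb hσ hm hA3
  have hderiv : ∀ z ∈ Ioc 0 lam,
      HasDerivAt (fun a => ∫ y in a..lam, (psi b σ m y)⁻¹) (-(psi b σ m z)⁻¹) z := by
    intro z hz
    refine intervalIntegral.integral_hasDerivAt_left
      ((hcont.mono fun y hy => ?_).intervalIntegrable)
      (hcont.stronglyMeasurableAtFilter isOpen_Ioi z hz.1) (hcont.continuousAt (Ioi_mem_nhds hz.1))
    rw [uIcc_of_le hz.2] at hy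
    exact hz.1.trans_le hy.1
  rw [setIntegral_Ioi_comp_eq_setIntegral_Ioc hderiv
    (fun z hz => inv_pos.2 (psi_pos hb hσ hm hA3 hz.1)) intervalIntegral.integral_same
    (hv lam hlam)]
  simp_rw [inv_mul_eq_div]

end Mechanisms

section Laplace

variable {Ω : Type*} [MeasurableSpace Ω] {μ : Measure Ω} {Z : Ω → ℝ}

lemma aemeasurable_of_integral_exp_neg_ne_zero (h : ∫ ω, exp (-Z ω) ∂μ ≠ 0) :
    AEMeasurable Z μ := by
  have hexp : AEMeasurable (fun ω => exp (-Z ω)) μ :=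
    (Integrable.of_integral_ne_zero h).aemeasurable
  refine (measurable_log.comp_aemeasurable hexp).neg.congr (ae_of_all _ fun ω => ?_)
  simp

variable [IsFiniteMeasure μ]

lemma integrable_exp_neg_mul (hZ : AEMeasurable Z μ) (hZpos : ∀ ω, 0 ≤ Z ω) {x : ℝ}
    (hx : 0 ≤ x) : Integrable (fun ω => exp (-(x * Z ω))) μ := by
  refine Integrable.of_bound (C := 1) (by fun_prop) (ae_of_all _ fun ω => ?_)
  rw [Real.norm_eq_abs, abs_of_pos (exp_pos _), exp_le_one_iff, neg_nonpos]
  exact mul_nonneg hx (hZpos ω)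

lemma integrable_mul_exp_neg_mul (hZ : AEMeasurable Z μ) (hZpos : ∀ ω, 0 ≤ Z ω) {x : ℝ}
    (hx : 0 < x) : Integrable (fun ω => Z ω * exp (-(x * Z ω))) μ := by
  refine Integrable.of_bound (C := (x * exp 1)⁻¹) (by fun_prop) (ae_of_all _ fun ω => ?_)
  rw [Real.norm_eq_abs, abs_of_nonneg (mul_nonneg (hZpos ω) (exp_pos _).le)]
  exact mul_exp_neg_mul_le hx _

lemma hasDerivAt_integral_exp_neg_mul (hZ : AEMeasurable Z μ) (hZpos : ∀ ω, 0 ≤ Z ω) {lam : ℝ}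
    (hlam : 0 < lam) :
    HasDerivAt (fun x => ∫ ω, exp (-(x * Z ω)) ∂μ) (-∫ ω, Z ω * exp (-(lam * Z ω)) ∂μ) lam := by
  have hball : Metric.ball lam (lam / 2) ⊆ Ioi (lam / 2) := fun x hx => by
    rw [Metric.mem_ball, Real.dist_eq] at hx
    show lam / 2 < x
    linarith [(abs_lt.1 hx).1]
  rw [← integral_neg]
  refine (hasDerivAt_integral_of_dominated_loc_of_deriv_le
    (F := fun x ω => exp (-(x * Z ω))) (F' := fun x ω => -(Z ω * exp (-(x * Z ω))))
    (bound := fun _ => (lam / 2 * exp 1)⁻¹)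
    (Metric.ball_mem_nhds lam (half_pos hlam)) (Eventually.of_forall fun _ => by fun_prop)
    (integrable_exp_neg_mul hZ hZpos hlam.le) (by fun_prop) ?_ (integrable_const _) ?_).2
  · filter_upwards with ω x hx
    rw [norm_neg, Real.norm_eq_abs, abs_of_nonneg (mul_nonneg (hZpos ω) (exp_pos _).le)]
    have hx' : lam / 2 < x := hball hx
    calc Z ω * exp (-(x * Z ω)) ≤ Z ω * exp (-(lam / 2 * Z ω)) := by
          have := hZpos ω
          gcongr
      _ ≤ (lam / 2 * exp 1)⁻¹ := mul_exp_neg_mul_le (half_pos hlam) _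
  · filter_upwards with ω x _
    simpa [mul_comm] using ((hasDerivAt_mul_const (Z ω)).neg.exp : HasDerivAt _ _ x)

lemma tendsto_integral_exp_neg_mul (hZ : AEMeasurable Z μ) (hZpos : ∀ ω, 0 ≤ Z ω) :
    Tendsto (fun x => ∫ ω, exp (-(x * Z ω)) ∂μ) (𝓝[>] 0) (𝓝 (μ.real univ)) := by
  have hlim : ∀ ω, Tendsto (fun x => exp (-(x * Z ω))) (𝓝[>] 0) (𝓝 1) := fun ω =>
    tendsto_nhdsWithin_of_tendsto_nhds (by simpa using (by fun_prop :
      Continuous fun x => exp (-(x * Z ω))).tendsto 0)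
  simpa using tendsto_integral_filter_of_dominated_convergence (l := 𝓝[>] (0 : ℝ))
    (fun _ => (1 : ℝ))
    (Eventually.of_forall fun _ => by fun_prop)
    (eventually_nhdsWithin_of_forall fun x (hx : 0 < x) => ae_of_all _ fun ω => by
      rw [Real.norm_eq_abs, abs_of_pos (exp_pos _), exp_le_one_iff, neg_nonpos]
      exact mul_nonneg hx.le (hZpos ω))
    (integrable_const 1) (ae_of_all _ hlim)

lemma integral_eq_of_tendsto_integral_mul_exp_neg_mul (hZ : AEMeasurable Z μ)
    (hZpos : ∀ ω, 0 ≤ Z ω) {c : ℝ}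
    (h : Tendsto (fun x => ∫ ω, Z ω * exp (-(x * Z ω)) ∂μ) (𝓝[>] 0) (𝓝 c)) :
    ∫ ω, Z ω ∂μ = c := by
  set x : ℕ → ℝ := fun k => 1 / (k + 1)
  have hxpos : ∀ k, 0 < x k := fun k => Nat.one_div_pos_of_nat
  have hx : Tendsto x atTop (𝓝[>] 0) :=
    tendsto_nhdsWithin_iff.2 ⟨tendsto_one_div_add_atTop_nhds_zero_nat, Eventually.of_forall hxpos⟩
  have hpt : ∀ ω, Tendsto (fun k => Z ω * exp (-(x k * Z ω))) atTop (𝓝 (Z ω)) := fun ω => by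
    have hcont : Tendsto (fun y => Z ω * exp (-(y * Z ω))) (𝓝 0) (𝓝 (Z ω)) := by
      simpa using (by fun_prop : Continuous fun y => Z ω * exp (-(y * Z ω))).tendsto 0
    exact hcont.comp (tendsto_nhdsWithin_iff.1 hx).1
  have hmono : ∀ ω, Monotone fun k => ENNReal.ofReal (Z ω * exp (-(x k * Z ω))) :=
    fun ω k l hkl => by
      have hxkl : x l ≤ x k := Nat.one_div_le_one_div hkl
      have := hZpos ω
      dsimp only
      gcongr
  have hlint := lintegral_tendsto_of_tendsto_of_monotone (μ := μ)
    (fun k => (hZ.mul (by fun_prop)).ennreal_ofReal) (ae_of_all _ hmono)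
    (ae_of_all _ fun ω => (ENNReal.tendsto_ofReal (hpt ω)))
  replace hlint := hlint.congr fun k => (ofReal_integral_eq_lintegral_ofReal
    (integrable_mul_exp_neg_mul hZ hZpos (hxpos k))
    (ae_of_all _ fun ω => mul_nonneg (hZpos ω) (exp_pos _).le)).symm
  have hc : 0 ≤ c := ge_of_tendsto h (eventually_nhdsWithin_of_forall fun y _ =>
    integral_nonneg fun ω => mul_nonneg (hZpos ω) (exp_pos _).le)
  rw [integral_eq_lintegral_of_nonneg_ae (ae_of_all _ hZpos) hZ.aestronglyMeasurable,
    tendsto_nhds_unique hlint (ENNReal.tendsto_ofReal (h.comp hx)), ENNReal.toReal_ofReal hc]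

end Laplace

theorem stationary_size_biased_identity_general (b σ β : ℝ) (m n : Measure ℝ)
    (hb : 0 ≤ b) (hσ : 0 ≤ σ)
    (hm : IntegrableOn (fun u => min u (u ^ 2)) (Ioi 0) m)
    (hn : IntegrableOn (fun u => min 1 u) (Ioi 0) n)
    (hA2 : condA2 b σ β m n) (hA3 : condA3 σ m)
    (v : ℝ → ℝ → ℝ) (hv : IsCumulant b σ m v)
    (Ω : Type*) [MeasureSpace Ω] [IsProbabilityMeasure (volume : Measure Ω)]
    (Z : Ω → ℝ) (hZpos : ∀ ω, 0 ≤ Z ω)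
    (hLaplace : ∀ lam ≥ (0 : ℝ),
      ∫ ω, Real.exp (-(lam * Z ω)) =
        Real.exp (-(∫ s in Ioi (0 : ℝ), Fim β n (v s lam)))) :
    (∀ lam > (0 : ℝ),
      ∫ ω, Z ω * Real.exp (-(lam * Z ω)) =
        Fim β n lam / psi b σ m lam * ∫ ω, Real.exp (-(lam * Z ω))) ∧
    (0 < b → IntegrableOn (fun u => u) (Ioi 0) n →
      ∫ ω, Z ω = (β + ∫ u in Ioi (0 : ℝ), u ∂n) / b) := by
  have hZ : AEMeasurable Z := by
    have h1 := hLaplace 1 zero_le_one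
    simp only [one_mul] at h1
    exact aemeasurable_of_integral_exp_neg_ne_zero (h1 ▸ (exp_pos _).ne')
  set Φ : ℝ → ℝ := fun x => ∫ z in Ioc 0 x, Fim β n z / psi b σ m z
  have hL : ∀ x > 0, ∫ ω, exp (-(x * Z ω)) = exp (-Φ x) := fun x hx => by
    rw [hLaplace x hx.le, setIntegral_Ioi_comp_cumulant hb hσ hm hA3 hv hx]
  have hΦ : ∀ x > 0, HasDerivAt Φ (Fim β n x / psi b σ m x) x := fun x hx =>
    hasDerivAt_setIntegral_Ioc (fun y _ => integrableOn_Fim_div_psi hb hσ hm hn hA2 hA3 y) hx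
      ((continuousOn_Fim_div_psi hb hσ hm hn hA3).continuousAt (Ioi_mem_nhds hx))
  -- differentiate both sides of `hL` at `lam`
  have hsize : ∀ lam > 0, ∫ ω, Z ω * exp (-(lam * Z ω)) =
      Fim β n lam / psi b σ m lam * ∫ ω, exp (-(lam * Z ω)) := fun lam hlam => by
    have hexp := (hΦ lam hlam).neg.exp.congr_of_eventuallyEq
      (eventually_of_mem (Ioi_mem_nhds hlam) hL)
    have hunique := (hasDerivAt_integral_exp_neg_mul hZ hZpos hlam).unique hexp
    rw [hL lam hlam]
    linear_combination -hunique
  refine ⟨hsize, fun hb' hn' => integral_eq_of_tendsto_integral_mul_exp_neg_mul hZ hZpos ?_⟩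
  have hlim := (tendsto_Fim_div_psi (β := β) (σ := σ) hm hn' hb'.ne').mul
    (tendsto_integral_exp_neg_mul hZ hZpos)
  rw [probReal_univ, mul_one] at hlim
  exact hlim.congr' (eventually_nhdsWithin_of_forall fun x hx => (hsize x hx).symm)

theorem stationary_size_biased_identity (b σ β : ℝ) (m n : Measure ℝ)
    (hb : 0 ≤ b) (hσ : 0 ≤ σ) (hβ : 0 ≤ β)
    (hm : IntegrableOn (fun u => min u (u ^ 2)) (Ioi 0) m)
    (hn : IntegrableOn (fun u => min 1 u) (Ioi 0) n)
    (hA2 : condA2 b σ β m n) (hA3 : condA3 σ m)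
    (v : ℝ → ℝ → ℝ) (hv : IsCumulant b σ m v)
    (hv0 : ∀ t ≥ (0 : ℝ), v t 0 = 0)
    (Ω : Type*) [MeasureSpace Ω] [IsProbabilityMeasure (volume : Measure Ω)]
    (Z : Ω → ℝ) (hZpos : ∀ ω, 0 ≤ Z ω)
    (hLaplace : ∀ lam ≥ (0 : ℝ),
      ∫ ω, Real.exp (-(lam * Z ω)) =
        Real.exp (-(∫ s in Ioi (0 : ℝ), Fim β n (v s lam)))) :
    (∀ lam > (0 : ℝ),
      ∫ ω, Z ω * Real.exp (-(lam * Z ω)) =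
        Fim β n lam / psi b σ m lam * ∫ ω, Real.exp (-(lam * Z ω))) ∧
    (0 < b → IntegrableOn (fun u => u) (Ioi 0) n →
      ∫ ω, Z ω = (β + ∫ u in Ioi (0 : ℝ), u ∂n) / b) :=
  stationary_size_biased_identity_general b σ β m n hb hσ hm hn hA2 hA3 v hv Ω Z hZpos hLaplace
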